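/- Let T be a tree on n ≥ 1 vertices and let d ≥ 0 be an integer. Say that a graph is obtained from T by p contractions if there is a sequence T = T_0, T_1, …, T_p in which each T_{i+1} = T_i/e_i for some edge e_i of T_i. Then there exists a tree T'' obtained from T by some number of contractions with α(T'') ≤ α(T) − d if and only if d ≤ α(T) − 1; and in that case the minimum number p of contractions needed to obtain such a tree T'' equals max(d, 2(d + μ(T)) − n) (where the maximum is taken over the integers). Here α(T) = n − μ(T). -/

import Mathlib

open SimpleGraph

universe u
variable {V : Type*} {W : Type*}

/-- `H` is isomorphic to an induced subgraph of `G`. -/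
def SimpleGraph.IsIndSubgraph {W V : Type*} (H : SimpleGraph W) (G : SimpleGraph V) : Prop :=
  ∃ f : W ↪ V, ∀ a b, G.Adj (f a) (f b) ↔ H.Adj a b

/-- A set of pairwise non-adjacent vertices. -/
def SimpleGraph.IsIndepSet' (G : SimpleGraph V) (s : Set V) : Prop :=
  s.Pairwise fun a b => ¬ G.Adj a b

/-- The independence number of `G`. -/
noncomputable def SimpleGraph.indepNum' (G : SimpleGraph V) : ℕ :=
  sSup {n | ∃ s : Set V, G.IsIndepSet' s ∧ s.ncard = n}

/-- A matching, viewed as a set of pairwise disjoint edges of `G`. -/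
def SimpleGraph.IsMatchingSet (G : SimpleGraph V) (M : Set (Sym2 V)) : Prop :=
  M ⊆ G.edgeSet ∧ M.Pairwise fun e f => ∀ x, x ∈ e → x ∉ f

/-- The matching number of `G`. -/
noncomputable def SimpleGraph.matchingNum (G : SimpleGraph V) : ℕ :=
  sSup {n | ∃ M : Set (Sym2 V), G.IsMatchingSet M ∧ M.ncard = n}

/-- A vertex cover. -/
def SimpleGraph.IsVertexCover' (G : SimpleGraph V) (C : Set V) : Prop :=
  ∀ u v, G.Adj u v → u ∈ C ∨ v ∈ C

/-- Contraction of the edge `uv`, identifying the new vertex with `v`. -/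
def SimpleGraph.contractEdge (G : SimpleGraph V) (u v : V) : SimpleGraph {x : V // x ≠ u} where
  Adj x y := x ≠ y ∧ (G.Adj x y ∨ (x.1 = v ∧ G.Adj u y) ∨ (y.1 = v ∧ G.Adj u x))
  symm := ⟨by
    rintro x y ⟨hne, h⟩
    refine ⟨hne.symm, ?_⟩
    rcases h with h | h | h
    · exact Or.inl h.symm
    · exact Or.inr (Or.inr h)
    · exact Or.inr (Or.inl h)⟩
  loopless := ⟨fun x h => h.1 rfl⟩

/-- A maximal clique. -/
def SimpleGraph.IsMaxlClique (G : SimpleGraph V) (K : Set V) : Prop :=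
  G.IsClique K ∧ ∀ K' : Set V, G.IsClique K' → K ⊆ K' → K' = K

/-- `ObtainedByContractions G H p` means that the graph `H` can be obtained from the graph `G`
by a sequence of `p` edge contractions. -/
inductive ObtainedByContractions :
    {α : Type u} → SimpleGraph α → {β : Type u} → SimpleGraph β → ℕ → Prop
  | refl {α : Type u} (G : SimpleGraph α) : ObtainedByContractions G G 0
  | step {α β : Type u} (G : SimpleGraph α) (H : SimpleGraph β) (u v : α) (p : ℕ)
      (hadj : G.Adj u v) (h : ObtainedByContractions (G.contractEdge u v) H p) :
      ObtainedByContractions G H (p + 1)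

/-!
Contracting an edge never raises `α` and lowers it by at most one, and a tree satisfies König's
identity `α + μ = n`, so `n ≤ 2α`. After `p` contractions the tree `T''` has `n - p` vertices,
`α(T) - p ≤ α(T'')` and `n - p ≤ 2α(T'')`; this gives `p ≥ d` and `p ≥ 2(d + μ) - n`.
Conversely, contracting an edge at a vertex missed by a maximum matching keeps `μ`, hence lowers
`α` by one. Once the tree has a perfect matching (`n = 2α`), any contraction keeps `α` and leaves
a vertex unmatched, so from then on each unit of `α` costs two contractions.
-/

lemma Nat.card_subtype_ne_add_one {V : Type*} [Finite V] (u : V) :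
    Nat.card {x // x ≠ u} + 1 = Nat.card V := by
  have := Set.ncard_add_ncard_compl {u}
  rw [Set.ncard_singleton, add_comm, ← Nat.card_coe_set_eq] at this
  exact this

lemma Nat.card_prod_bool (α : Type*) : Nat.card (α × Bool) = 2 * Nat.card α := by
  rw [Nat.card_prod, Nat.card_eq_fintype_card (α := Bool), Fintype.card_bool, mul_comm]

namespace SimpleGraph

variable {G : SimpleGraph V} {H : SimpleGraph W} {u v : V}

lemma IsIndepSet'.image {f : W → V}
    (hadj : ∀ a b, G.Adj (f a) (f b) → H.Adj a b) {s : Set W} (hs : H.IsIndepSet' s) :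
    G.IsIndepSet' (f '' s) := by
  rintro _ ⟨a, ha, rfl⟩ _ ⟨b, hb, rfl⟩ hne hab
  exact hs ha hb (ne_of_apply_ne f hne) (hadj a b hab)

lemma IsMatchingSet.image {f : W → V} (hf : f.Injective)
    (hadj : ∀ a b, H.Adj a b → G.Adj (f a) (f b)) {M : Set (Sym2 W)} (hM : H.IsMatchingSet M) :
    G.IsMatchingSet (Sym2.map f '' M) := by
  refine ⟨?_, ?_⟩
  · rintro _ ⟨e, he, rfl⟩
    induction e using Sym2.ind with
    | _ a b => exact hadj a b (hM.1 he)
  · rintro _ ⟨e, he, rfl⟩ _ ⟨e', he', rfl⟩ hne x hx hx'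
    obtain ⟨a, ha, rfl⟩ := Sym2.mem_map.mp hx
    obtain ⟨b, hb, hba⟩ := Sym2.mem_map.mp hx'
    exact hM.2 he he' (ne_of_apply_ne _ hne) a ha (hf hba ▸ hb)

section Finite

variable [Finite V]

lemma indepNum'_bddAbove (G : SimpleGraph V) :
    BddAbove {n | ∃ s : Set V, G.IsIndepSet' s ∧ s.ncard = n} :=
  ⟨Nat.card V, by rintro _ ⟨s, -, rfl⟩; exact Set.ncard_le_card s⟩

lemma matchingNum_bddAbove (G : SimpleGraph V) :
    BddAbove {n | ∃ M : Set (Sym2 V), G.IsMatchingSet M ∧ M.ncard = n} :=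
  ⟨Nat.card (Sym2 V), by rintro _ ⟨M, -, rfl⟩; exact Set.ncard_le_card M⟩

lemma IsIndepSet'.ncard_le_indepNum' {s : Set V} (hs : G.IsIndepSet' s) :
    s.ncard ≤ G.indepNum' :=
  le_csSup G.indepNum'_bddAbove ⟨s, hs, rfl⟩

lemma IsMatchingSet.ncard_le_matchingNum {M : Set (Sym2 V)} (hM : G.IsMatchingSet M) :
    M.ncard ≤ G.matchingNum :=
  le_csSup G.matchingNum_bddAbove ⟨M, hM, rfl⟩

lemma exists_isIndepSet'_ncard_eq_indepNum' (G : SimpleGraph V) :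
    ∃ s : Set V, G.IsIndepSet' s ∧ s.ncard = G.indepNum' :=
  Nat.sSup_mem (s := {n | ∃ s : Set V, G.IsIndepSet' s ∧ s.ncard = n})
    ⟨0, ∅, Set.pairwise_empty _, Set.ncard_empty V⟩ G.indepNum'_bddAbove

lemma exists_isMatchingSet_ncard_eq_matchingNum (G : SimpleGraph V) :
    ∃ M : Set (Sym2 V), G.IsMatchingSet M ∧ M.ncard = G.matchingNum :=
  Nat.sSup_mem (s := {n | ∃ M : Set (Sym2 V), G.IsMatchingSet M ∧ M.ncard = n})
    ⟨0, ∅, ⟨Set.empty_subset _, Set.pairwise_empty _⟩, Set.ncard_empty _⟩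
    G.matchingNum_bddAbove

lemma one_le_indepNum' [Nonempty V] (G : SimpleGraph V) : 1 ≤ G.indepNum' := by
  obtain ⟨x⟩ := ‹Nonempty V›
  simpa using IsIndepSet'.ncard_le_indepNum' (G := G) (Set.pairwise_singleton x _)

lemma indepNum'_le_of_injective [Finite W] {f : W → V} (hf : f.Injective)
    (hadj : ∀ a b, G.Adj (f a) (f b) → H.Adj a b) : H.indepNum' ≤ G.indepNum' := by
  obtain ⟨s, hs, hcard⟩ := H.exists_isIndepSet'_ncard_eq_indepNum'
  rw [← hcard, ← Set.ncard_image_of_injective s hf]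
  exact (hs.image hadj).ncard_le_indepNum'

end Finite

noncomputable def edgeEndpoint (M : Set (Sym2 V)) (z : M × Bool) : V :=
  if z.2 then z.1.1.out.1 else z.1.1.out.2

lemma edgeEndpoint_mem {M : Set (Sym2 V)} (z : M × Bool) : edgeEndpoint M z ∈ z.1.1 := by
  unfold edgeEndpoint
  split
  exacts [Sym2.out_fst_mem _, Sym2.out_snd_mem _]

lemma exists_forall_notMem_of_two_mul_ncard_lt [Finite V] {M : Set (Sym2 V)}
    (h : 2 * M.ncard < Nat.card V) :
    ∃ w, ∀ e ∈ M, w ∉ e := by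
  by_contra! hcover
  have hsurj : (edgeEndpoint M).Surjective := by
    intro w
    obtain ⟨e, he, hwe⟩ := hcover w
    rw [← Quot.out_eq e, Sym2.mem_iff] at hwe
    rcases hwe with hw | hw
    exacts [⟨(⟨e, he⟩, true), hw.symm⟩, ⟨(⟨e, he⟩, false), hw.symm⟩]
  have := Nat.card_coe_set_eq M ▸ Nat.card_prod_bool M ▸ Nat.card_le_card_of_surjective _ hsurj
  omega

namespace IsMatchingSet

variable {M : Set (Sym2 V)}

lemma injective_edgeEndpoint (hM : G.IsMatchingSet M) : (edgeEndpoint M).Injective := by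
  rintro ⟨e, b⟩ ⟨f, c⟩ h
  obtain rfl : e = f := by
    by_contra hne
    exact hM.2 e.2 f.2 (Subtype.coe_ne_coe.mpr hne) _ (edgeEndpoint_mem (e, b))
      (h ▸ edgeEndpoint_mem (f, c))
  have hloop : e.1.out.1 ≠ e.1.out.2 := by
    have := G.not_isDiag_of_mem_edgeSet (hM.1 e.2)
    rwa [← Quot.out_eq e.1, Sym2.mk_isDiag_iff] at this
  unfold edgeEndpoint at h
  cases b <;> cases c <;> simp only [Bool.false_eq_true, ↓reduceIte] at h ⊢
  exacts [(hloop h.symm).elim, (hloop h).elim]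

lemma two_mul_ncard_le [Finite V] (hM : G.IsMatchingSet M) : 2 * M.ncard ≤ Nat.card V :=
  Nat.card_coe_set_eq M ▸ Nat.card_prod_bool M ▸
    Nat.card_le_card_of_injective _ hM.injective_edgeEndpoint

lemma ncard_le_matchingNum_of_subtype [Finite V] {p : V → Prop} {H : SimpleGraph {x // p x}}
    (hM : G.IsMatchingSet M) (hp : ∀ e ∈ M, ∀ x ∈ e, p x)
    (hH : ∀ a b : {x // p x}, G.Adj a b → H.Adj a b) : M.ncard ≤ H.matchingNum := by
  have hval : (Sym2.map (Subtype.val : {x // p x} → V)).Injective :=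
    Sym2.map.injective Subtype.val_injective
  have hrange : M ⊆ Set.range (Sym2.map (Subtype.val : {x // p x} → V)) := by
    intro e he
    induction e using Sym2.ind with
    | _ a b => exact ⟨s(⟨a, hp _ he a (Sym2.mem_mk_left a b)⟩,
        ⟨b, hp _ he b (Sym2.mem_mk_right a b)⟩), rfl⟩
  have hM' : H.IsMatchingSet (Sym2.map Subtype.val ⁻¹' M) := by
    refine ⟨fun e he => ?_, fun e he f hf hne x hxe hxf => ?_⟩
    · induction e using Sym2.ind with
      | _ a b => exact hH a b (hM.1 he)
    · exact hM.2 he hf (hval.ne hne) x (Sym2.mem_map.mpr ⟨x, hxe, rfl⟩)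
        (Sym2.mem_map.mpr ⟨x, hxf, rfl⟩)
  rw [← Set.ncard_preimage_of_injective_subset_range hval hrange]
  exact hM'.ncard_le_matchingNum

end IsMatchingSet

lemma two_mul_matchingNum_le [Finite V] (G : SimpleGraph V) : 2 * G.matchingNum ≤ Nat.card V := by
  obtain ⟨M, hM, hcard⟩ := G.exists_isMatchingSet_ncard_eq_matchingNum
  exact hcard ▸ hM.two_mul_ncard_le

lemma IsIndepSet'.exists_mem_notMem {s : Set V} (hs : G.IsIndepSet' s) {e : Sym2 V}
    (he : e ∈ G.edgeSet) : ∃ x ∈ e, x ∉ s := by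
  induction e using Sym2.ind with
  | _ a b =>
    by_cases ha : a ∈ s
    · exact ⟨b, Sym2.mem_mk_right a b, fun hb => hs ha hb (G.ne_of_adj he) he⟩
    · exact ⟨a, Sym2.mem_mk_left a b, ha⟩

lemma indepNum'_add_matchingNum_le [Finite V] (G : SimpleGraph V) :
    G.indepNum' + G.matchingNum ≤ Nat.card V := by
  obtain ⟨S, hS, hScard⟩ := G.exists_isIndepSet'_ncard_eq_indepNum'
  obtain ⟨M, hM, hMcard⟩ := G.exists_isMatchingSet_ncard_eq_matchingNum
  choose f hfe hfS using fun e : M => hS.exists_mem_notMem (hM.1 e.2)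
  have hinj : Function.Injective fun e : M => (⟨f e, hfS e⟩ : ↥Sᶜ) := by
    intro e e' h
    by_contra hne
    have hff : f e = f e' := congrArg Subtype.val h
    exact hM.2 e.2 e'.2 (Subtype.coe_ne_coe.mpr hne) _ (hfe e) (hff ▸ hfe e')
  have := Nat.card_le_card_of_injective _ hinj
  rw [Nat.card_coe_set_eq, Nat.card_coe_set_eq] at this
  have := Set.ncard_add_ncard_compl S
  omega

lemma IsAcyclic.exists_adj_forall_adj_eq [Finite V] (hG : G.IsAcyclic) {a b : V}
    (hab : G.Adj a b) : ∃ u v, G.Adj u v ∧ ∀ w, G.Adj u w → w = v := by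
  have : Nonempty V := ⟨a⟩
  obtain ⟨u, v, p, hp, hmax⟩ := Walk.exists_isPath_forall_isPath_length_le_length G
  have hnil : ¬p.Nil := by
    intro hnil
    have := hmax a b (Walk.cons hab Walk.nil) (by simp [hab.ne])
    simp [hnil.length_eq_zero] at this
  refine ⟨u, p.snd, p.adj_snd hnil, fun w hw => hG.eq_snd_of_adj_start hp hw ?_⟩
  by_contra hw'
  have := hmax _ _ _ (hp.cons hw' (h := hw.symm))
  simp at this

/-- Removing a leaf `u` together with its neighbour `v` lowers `n`, `α` and `μ` by `2`, `1`, `1`: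
add `u` to an independent set and `s(u, v)` to a matching of the rest. -/
lemma IsAcyclic.card_le_indepNum'_add_matchingNum [Finite V] (hG : G.IsAcyclic) :
    Nat.card V ≤ G.indepNum' + G.matchingNum := by
  induction hn : Nat.card V using Nat.strong_induction_on generalizing V with
  | _ n ih =>
  by_cases hE : ∃ a b, G.Adj a b
  swap
  · push Not at hE
    have := IsIndepSet'.ncard_le_indepNum' (G := G) (s := Set.univ) fun a _ b _ _ => hE a b
    rw [Set.ncard_univ] at this
    omega
  obtain ⟨a, b, hab⟩ := hE
  obtain ⟨u, v, huv, hleaf⟩ := hG.exists_adj_forall_adj_eq hab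
  set s : Set V := {u, v}ᶜ
  have hs (x : s) : x.1 ≠ u ∧ x.1 ≠ v := by
    simpa only [s, Set.mem_compl_iff, Set.mem_insert_iff, Set.mem_singleton_iff, not_or] using x.2
  have hcard : Nat.card s + 2 = n := by
    rw [Nat.card_coe_set_eq, ← hn, ← Set.ncard_pair huv.ne, Set.ncard_compl_add_ncard]
  have hrest := ih _ (by omega) (hG.induce s) rfl
  obtain ⟨S, hS, hScard⟩ := (G.induce s).exists_isIndepSet'_ncard_eq_indepNum'
  obtain ⟨M, hM, hMcard⟩ := (G.induce s).exists_isMatchingSet_ncard_eq_matchingNum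
  have hSu : G.IsIndepSet' (insert u (Subtype.val '' S)) := by
    refine Set.pairwise_insert.mpr ⟨hS.image (f := Subtype.val) fun a b h => h, ?_⟩
    rintro _ ⟨x, -, rfl⟩ -
    exact ⟨fun h => (hs x).2 (hleaf x h), fun h => (hs x).2 (hleaf x h.symm)⟩
  have hMuv : G.IsMatchingSet (insert s(u, v) (Sym2.map Subtype.val '' M)) := by
    have hMs := hM.image Subtype.val_injective fun a b h => h
    have hdisj (e : Sym2 s) (x : V) (hx : x ∈ s(u, v)) (hxe : x ∈ Sym2.map Subtype.val e) :
        False := by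
      obtain ⟨y, -, rfl⟩ := Sym2.mem_map.mp hxe
      rcases Sym2.mem_iff.mp hx with h | h
      exacts [(hs y).1 h, (hs y).2 h]
    refine ⟨Set.insert_subset huv hMs.1, Set.pairwise_insert.mpr ⟨hMs.2, ?_⟩⟩
    rintro _ ⟨e, -, rfl⟩ -
    exact ⟨fun x hx hxe => hdisj e x hx hxe, fun x hxe hx => hdisj e x hx hxe⟩
  have hα := hSu.ncard_le_indepNum'
  have hμ := hMuv.ncard_le_matchingNum
  rw [Set.ncard_insert_of_notMem (by rintro ⟨x, -, h⟩; exact (hs x).1 h),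
    Set.ncard_image_of_injective _ Subtype.val_injective, hScard] at hα
  rw [Set.ncard_insert_of_notMem (by
      rintro ⟨e, -, he⟩
      obtain ⟨y, -, h⟩ := Sym2.mem_map.mp (he ▸ Sym2.mem_mk_left u v)
      exact (hs y).1 h),
    Set.ncard_image_of_injective _ (Sym2.map.injective Subtype.val_injective), hMcard] at hμ
  omega

lemma IsAcyclic.indepNum'_add_matchingNum [Finite V] (hG : G.IsAcyclic) :
    G.indepNum' + G.matchingNum = Nat.card V :=
  G.indepNum'_add_matchingNum_le.antisymm hG.card_le_indepNum'_add_matchingNum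

lemma IsAcyclic.card_le_two_mul_indepNum' [Finite V] (hG : G.IsAcyclic) :
    Nat.card V ≤ 2 * G.indepNum' := by
  have := hG.indepNum'_add_matchingNum
  have := G.two_mul_matchingNum_le
  omega

lemma contractEdge_adj_of_adj {x y : {x // x ≠ u}} (h : G.Adj x y) :
    (G.contractEdge u v).Adj x y :=
  ⟨fun hxy => G.ne_of_adj h (congrArg Subtype.val hxy), Or.inl h⟩

lemma indepNum'_contractEdge_le [Finite V] : (G.contractEdge u v).indepNum' ≤ G.indepNum' :=
  indepNum'_le_of_injective Subtype.val_injective fun _ _ => contractEdge_adj_of_adj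

lemma indepNum'_le_indepNum'_contractEdge_add_one [Finite V] (huv : G.Adj u v) :
    G.indepNum' ≤ (G.contractEdge u v).indepNum' + 1 := by
  obtain ⟨S, hS, hcard⟩ := G.exists_isIndepSet'_ncard_eq_indepNum'
  set S' : Set {x // x ≠ u} := {x | x.1 ∈ S ∧ x.1 ≠ v}
  have hS' : (G.contractEdge u v).IsIndepSet' S' := by
    rintro x ⟨hx, hxv⟩ y ⟨hy, hyv⟩ hxy ⟨-, h | ⟨h, -⟩ | ⟨h, -⟩⟩
    exacts [hS hx hy (Subtype.coe_ne_coe.mpr hxy) h, hxv h, hyv h]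
  -- `S` cannot contain both ends of `uv`, so it loses at most one vertex `w`.
  obtain ⟨w, hw⟩ : ∃ w, ∀ x ∈ S, x = w ∨ x ≠ u ∧ x ≠ v := by
    by_cases hu : u ∈ S
    · exact ⟨u, fun x hx => or_iff_not_imp_left.mpr fun hxu =>
        ⟨hxu, fun hxv => hS hu (hxv ▸ hx) huv.ne huv⟩⟩
    · exact ⟨v, fun x hx => or_iff_not_imp_left.mpr fun hxv =>
        ⟨fun hxu => hu (hxu ▸ hx), hxv⟩⟩
  have hsub : S ⊆ insert w (Subtype.val '' S') := by
    intro x hx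
    rcases hw x hx with rfl | ⟨hxu, hxv⟩
    exacts [Set.mem_insert x _, Or.inr ⟨⟨x, hxu⟩, ⟨hx, hxv⟩, rfl⟩]
  calc G.indepNum' = S.ncard := hcard.symm
    _ ≤ (insert w (Subtype.val '' S')).ncard := Set.ncard_le_ncard hsub
    _ ≤ S'.ncard + 1 := by
      grw [Set.ncard_insert_le, Set.ncard_image_of_injective _ Subtype.val_injective]
    _ ≤ (G.contractEdge u v).indepNum' + 1 := by grw [hS'.ncard_le_indepNum']

open Classical in
noncomputable def contractEdgeRetraction (hvu : v ≠ u) (x : V) : {x // x ≠ u} :=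
  if h : x = u then ⟨v, hvu⟩ else ⟨x, h⟩

lemma contractEdgeRetraction_self (hvu : v ≠ u) : contractEdgeRetraction hvu u = ⟨v, hvu⟩ :=
  dif_pos rfl

lemma contractEdgeRetraction_val (hvu : v ≠ u) (x : {x // x ≠ u}) :
    contractEdgeRetraction hvu x = x :=
  dif_neg x.2

lemma contractEdgeRetraction_adj_or_eq (huv : G.Adj u v) {a b : V} (hab : G.Adj a b) :
    (G.contractEdge u v).Adj (contractEdgeRetraction huv.ne' a) (contractEdgeRetraction huv.ne' b)
      ∨ contractEdgeRetraction huv.ne' a = contractEdgeRetraction huv.ne' b := by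
  unfold contractEdgeRetraction
  split_ifs with ha hb hb
  · exact absurd (ha.trans hb.symm) hab.ne
  all_goals simp only [contractEdge, Subtype.mk.injEq, ne_eq]
  all_goals grind [G.ne_of_adj, G.adj_symm]

lemma Connected.contractEdge (hG : G.Connected) (huv : G.Adj u v) :
    (G.contractEdge u v).Connected := by
  refine (connected_iff _).mpr ⟨fun x y => ?_, ⟨⟨v, huv.ne'⟩⟩⟩
  have := (reachable_iff_reflTransGen _ _).mp (hG.preconnected x.1 y.1)
  rw [reachable_iff_reflTransGen, ← contractEdgeRetraction_val huv.ne' x,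
    ← contractEdgeRetraction_val huv.ne' y]
  refine Relation.ReflTransGen.lift' _ (fun a b hab => ?_) _ _ this
  rcases contractEdgeRetraction_adj_or_eq huv hab with h | h
  exacts [.single h, by rw [Function.onFun, h]]

lemma edgeSet_contractEdge_subset (huv : G.Adj u v) :
    (G.contractEdge u v).edgeSet ⊆
      Sym2.map (contractEdgeRetraction huv.ne') '' (G.edgeSet \ {s(u, v)}) := by
  intro e he
  induction e using Sym2.ind with
  | _ x y =>
  have hx := contractEdgeRetraction_val huv.ne' x
  have hy := contractEdgeRetraction_val huv.ne' y
  have hu := contractEdgeRetraction_self huv.ne'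
  obtain ⟨hxy, h | ⟨hxv, h⟩ | ⟨hyv, h⟩⟩ := he
  · refine ⟨s(x.1, y.1), ⟨h, ?_⟩, by rw [Sym2.map_mk, hx, hy]⟩
    simp [x.2, y.2]
  · refine ⟨s(u, y.1), ⟨h, ?_⟩, ?_⟩
    · simp only [Set.mem_singleton_iff, Sym2.eq_iff]
      grind
    · rw [Sym2.map_mk, hu, hy]
      grind
  · refine ⟨s(u, x.1), ⟨h, ?_⟩, ?_⟩
    · simp only [Set.mem_singleton_iff, Sym2.eq_iff]
      grind
    · rw [Sym2.map_mk, hu, hx, Sym2.eq_swap]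
      grind

lemma ncard_edgeSet_contractEdge_add_one_le [Finite V] (huv : G.Adj u v) :
    (G.contractEdge u v).edgeSet.ncard + 1 ≤ G.edgeSet.ncard := by
  grw [Set.ncard_le_ncard (edgeSet_contractEdge_subset huv), Set.ncard_image_le,
    Set.ncard_sdiff_singleton_add_one (G.mem_edgeSet.mpr huv)]

lemma IsTree.contractEdge [Finite V] (hG : G.IsTree) (huv : G.Adj u v) :
    (G.contractEdge u v).IsTree := by
  have hconn := hG.connected.contractEdge huv
  have hn := hconn.card_vert_le_card_edgeSet_add_one
  have hE := ncard_edgeSet_contractEdge_add_one_le huv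
  have hG' := (isTree_iff_connected_and_card.mp hG).2
  have := Nat.card_subtype_ne_add_one u
  rw [Nat.card_coe_set_eq] at hn hG'
  exact isTree_iff_connected_and_card.mpr ⟨hconn, by rw [Nat.card_coe_set_eq]; omega⟩

lemma IsMatchingSet.ncard_le_matchingNum_contractEdge [Finite V] {M : Set (Sym2 V)}
    (hM : G.IsMatchingSet M) (hu : ∀ e ∈ M, u ∉ e) :
    M.ncard ≤ (G.contractEdge u v).matchingNum :=
  hM.ncard_le_matchingNum_of_subtype (fun e he _ hx hxu => hu e he (hxu ▸ hx))
    fun _ _ => contractEdge_adj_of_adj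

lemma IsTree.exists_adj_indepNum'_contractEdge_lt [Finite V] (hG : G.IsTree)
    (h2 : 2 ≤ Nat.card V) (h : Nat.card V < 2 * G.indepNum') :
    ∃ u v, G.Adj u v ∧ (G.contractEdge u v).indepNum' < G.indepNum' := by
  obtain ⟨M, hM, hMcard⟩ := G.exists_isMatchingSet_ncard_eq_matchingNum
  have hαμ := hG.isAcyclic.indepNum'_add_matchingNum
  obtain ⟨w, hw⟩ := exists_forall_notMem_of_two_mul_ncard_lt (M := M) (by omega)
  have : Nontrivial V := Finite.one_lt_card_iff_nontrivial.mp h2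
  obtain ⟨z, hwz⟩ := hG.connected.preconnected.exists_adj_of_nontrivial w
  have hμ := hM.ncard_le_matchingNum_contractEdge (v := z) hw
  have hαμ' := (hG.contractEdge hwz).isAcyclic.indepNum'_add_matchingNum
  have := Nat.card_subtype_ne_add_one w
  exact ⟨w, z, hwz, by omega⟩

lemma IsTree.exists_obtainedByContractions {V : Type u} [Finite V] {G : SimpleGraph V}
    (hG : G.IsTree) {d : ℕ} (hd : d < G.indepNum') :
    ∃ (W : Type u) (H : SimpleGraph W) (p : ℕ), ObtainedByContractions G H p ∧ H.IsTree ∧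
      H.indepNum' + d ≤ G.indepNum' ∧ p ≤ max d (2 * d + Nat.card V - 2 * G.indepNum') := by
  induction hn : Nat.card V generalizing V d with
  | zero =>
    have := G.indepNum'_add_matchingNum_le
    omega
  | succ n ih =>
  rcases d with _ | d
  · exact ⟨V, G, 0, .refl G, hG, le_rfl, Nat.zero_le _⟩
  have hαn := G.indepNum'_add_matchingNum_le
  have : Nontrivial V := Finite.one_lt_card_iff_nontrivial.mp (by omega)
  by_cases hexp : Nat.card V < 2 * G.indepNum'
  · obtain ⟨a, b, hab, hlt⟩ := hG.exists_adj_indepNum'_contractEdge_lt (by omega) hexp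
    have hle := indepNum'_le_indepNum'_contractEdge_add_one hab
    have hcard := Nat.card_subtype_ne_add_one a
    obtain ⟨W, H, p, hp, hH, hα, hpd⟩ :=
      ih (hG.contractEdge hab) (d := d) (by omega) (by omega)
    exact ⟨W, H, p + 1, .step G H a b p hab hp, hH, by omega, by omega⟩
  · obtain ⟨a⟩ := hG.connected.nonempty
    obtain ⟨b, hab⟩ := hG.connected.preconnected.exists_adj_of_nontrivial a
    have hle := indepNum'_contractEdge_le (G := G) (u := a) (v := b)
    have h2α := hG.isAcyclic.card_le_two_mul_indepNum'
    have h2α' := (hG.contractEdge hab).isAcyclic.card_le_two_mul_indepNum'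
    have hcard := Nat.card_subtype_ne_add_one a
    obtain ⟨W, H, p, hp, hH, hα, hpd⟩ :=
      ih (hG.contractEdge hab) (d := d + 1) (by omega) (by omega)
    exact ⟨W, H, p + 1, .step G H a b p hab hp, hH, by omega, by omega⟩

end SimpleGraph

namespace ObtainedByContractions

variable {α β : Type u} {G : SimpleGraph α} {H : SimpleGraph β} {p : ℕ}

lemma finite (h : ObtainedByContractions G H p) [Finite α] : Finite β := by
  revert ‹Finite α›
  induction h with
  | refl => infer_instance
  | step _ _ _ _ _ _ _ ih => exact ih

lemma card_add (h : ObtainedByContractions G H p) [Finite α] :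
    Nat.card β + p = Nat.card α := by
  revert ‹Finite α›
  induction h with
  | refl => intro _; rfl
  | step _ _ u _ _ _ _ ih =>
    intro _
    have := ih
    have := Nat.card_subtype_ne_add_one u
    omega

lemma indepNum'_le_add (h : ObtainedByContractions G H p) [Finite α] :
    G.indepNum' ≤ H.indepNum' + p := by
  revert ‹Finite α›
  induction h with
  | refl => intro _; exact le_rfl
  | step _ _ _ _ _ huv _ ih =>
    intro _
    have := ih
    have := SimpleGraph.indepNum'_le_indepNum'_contractEdge_add_one huv
    omega

end ObtainedByContractions

theorem stmt14_general {V : Type u} [Fintype V] (T : SimpleGraph V) (hT : T.IsTree)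
    (n : ℕ) (hn : Fintype.card V = n) (d : ℕ) :
    ((∃ (W : Type u) (T'' : SimpleGraph W) (p : ℕ),
        ObtainedByContractions T T'' p ∧ T''.IsTree ∧ T''.indepNum' ≤ T.indepNum' - d) ↔
      d ≤ T.indepNum' - 1) ∧
    (d ≤ T.indepNum' - 1 →
      ∃ p₀ : ℕ,
        IsLeast {p : ℕ | ∃ (W : Type u) (T'' : SimpleGraph W),
            ObtainedByContractions T T'' p ∧ T''.IsTree ∧ T''.indepNum' ≤ T.indepNum' - d} p₀ ∧
        (p₀ : ℤ) = max (d : ℤ) (2 * ((d : ℤ) + (T.matchingNum : ℤ)) - (n : ℤ))) ∧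
    T.indepNum' = n - T.matchingNum := by
  rw [← Nat.card_eq_fintype_card] at hn
  have hαμ := hT.isAcyclic.indepNum'_add_matchingNum
  have : Nonempty V := hT.connected.nonempty
  have hα := T.one_le_indepNum'
  have lower {W : Type u} {T'' : SimpleGraph W} {p : ℕ} (h : ObtainedByContractions T T'' p)
      (hT'' : T''.IsTree) (hle : T''.indepNum' ≤ T.indepNum' - d) :
      d < T.indepNum' ∧ d ≤ p ∧ n + 2 * d ≤ p + 2 * T.indepNum' := by
    have := h.finite
    have := hT''.connected.nonempty
    have := h.card_add
    have := h.indepNum'_le_add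
    have := hT''.isAcyclic.card_le_two_mul_indepNum'
    have := T''.one_le_indepNum'
    omega
  refine ⟨⟨fun ⟨_, _, _, h, hT'', hle⟩ => by have := lower h hT'' hle; omega, fun hd => ?_⟩,
    fun hd => ?_, by omega⟩
  · obtain ⟨W, H, p, h, hH, hHα, -⟩ := hT.exists_obtainedByContractions (d := d) (by omega)
    exact ⟨W, H, p, h, hH, by omega⟩
  · obtain ⟨W, H, p, h, hH, hHα, hpd⟩ :=
      hT.exists_obtainedByContractions (d := d) (by omega)
    have hp := lower h hH (by omega)
    refine ⟨p, ⟨⟨W, H, h, hH, by omega⟩, fun q ⟨_, _, h', hT'', hle⟩ => ?_⟩, by omega⟩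
    have := lower h' hT'' hle
    omega

/-- For a tree `T` on `n ≥ 1` vertices and `d ≥ 0`: a tree `T''` with
`α(T'') ≤ α(T) - d` can be obtained from `T` by contractions iff `d ≤ α(T) - 1`; in that case
the minimum number of contractions needed equals `max(d, 2(d + μ(T)) - n)` (maximum over the
integers). Moreover `α(T) = n - μ(T)`. -/
theorem stmt14 {V : Type u} [Fintype V] (T : SimpleGraph V) (hT : T.IsTree)
    (n : ℕ) (hn : Fintype.card V = n) (hn1 : 1 ≤ n) (d : ℕ) :
    ((∃ (W : Type u) (T'' : SimpleGraph W) (p : ℕ),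
        ObtainedByContractions T T'' p ∧ T''.IsTree ∧ T''.indepNum' ≤ T.indepNum' - d) ↔
      d ≤ T.indepNum' - 1) ∧
    (d ≤ T.indepNum' - 1 →
      ∃ p₀ : ℕ,
        IsLeast {p : ℕ | ∃ (W : Type u) (T'' : SimpleGraph W),
            ObtainedByContractions T T'' p ∧ T''.IsTree ∧ T''.indepNum' ≤ T.indepNum' - d} p₀ ∧
        (p₀ : ℤ) = max (d : ℤ) (2 * ((d : ℤ) + (T.matchingNum : ℤ)) - (n : ℤ))) ∧
    T.indepNum' = n - T.matchingNum :=
  stmt14_general T hT n hn d
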